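/- Let f : F^n → F be in layered canalizing form with r layers of sizes k_1, …, k_r, canalizing depth d, and canalizing input sets S_{i,j}, and suppose the core function P_C has exactly c ≥ 1 canalizing variables x_{s_1}, …, x_{s_c} with canalizing input sets S_{s_1}, …, S_{s_c} (but P_C is not 1-canalizing). If x_a is a variable in the support of P_C that is not canalizing for P_C, then the number of transitions changed by deleting x_a satisfies #{x ∈ F^n : f(x_1, …, x_{a−1}, 0, x_{a+1}, …, x_n) ≠ f(x)} ≤ p^{n − d − c − 1} · (∏_{i=1}^{r} ∏_{j=1}^{k_i} (p − |S_{i,j}|)) · (∏_{i=1}^{c} (p − |S_{s_i}|)) · (p − 1). -/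

import Mathlib

open Finset

/-- Indicator function of the complement of `S`: `Qt S x = 1` if `x ∉ S`, `0` if `x ∈ S`. -/
def Qt {F : Type*} [Fintype F] [DecidableEq F] [Zero F] [One F] (S : Finset F) (x : F) : F :=
  if x ∈ S then 0 else 1

/-- `g` actually depends on (is essential in) its `i`-th variable. -/
def DependsOnVar {F : Type*} (n : ℕ) (g : (Fin n → F) → F) (i : Fin n) : Prop :=
  ∃ x y : Fin n → F, (∀ j, j ≠ i → x j = y j) ∧ g x ≠ g y

/-- `g` is canalizing in its `i`-th variable with canalizing input set `S`
(a nonempty proper subset of `F`) and canalizing output `b`. -/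
def Canalizing {F : Type*} [Fintype F] [DecidableEq F] (n : ℕ) (g : (Fin n → F) → F)
    (i : Fin n) (S : Finset F) (b : F) : Prop :=
  S.Nonempty ∧ S ≠ Finset.univ ∧ ∀ x : Fin n → F, x i ∈ S → g x = b

/-- `f` is 1-canalizing in its `i`-th variable with canalizing input set `S`
(a nonempty proper subset of `F`) and canalizing output `b`: `f = b` whenever `x i ∈ S`,
and on `x i ∉ S` the value of `f` is given by a single function of the remaining variables
which is not identically `b`. -/
def OneCanalizing {F : Type*} [Fintype F] [DecidableEq F] (n : ℕ) (f : (Fin n → F) → F)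
    (i : Fin n) (S : Finset F) (b : F) : Prop :=
  S.Nonempty ∧ S ≠ Finset.univ ∧
  (∀ x : Fin n → F, x i ∈ S → f x = b) ∧
  (∀ x y : Fin n → F, x i ∉ S → y i ∉ S → (∀ j, j ≠ i → x j = y j) → f x = f y) ∧
  (∃ x : Fin n → F, x i ∉ S ∧ f x ≠ b)

/-- Nested evaluation `M₁(M₂(⋯(M_r · P + B_r)⋯) + B₂) + B₁`. -/
def nestEval {F : Type*} [Mul F] [Add F] : List (F × F) → F → F
  | [], P => P
  | (m, b) :: t, P => m * nestEval t P + b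

/-- Layered canalizing form data for a function of `n` variables with `r ≥ 1` layers:
pairwise disjoint layer blocks, nonempty proper canalizing input sets for the
layer variables, layer constants `B` with the last one nonzero, and a core function
`P_C` of the remaining variables having no 1-canalizing variables. -/
structure LayeredForm (F : Type*) [Field F] [Fintype F] [DecidableEq F] (n r : ℕ) where
  hr : 0 < r
  layer : Fin r → Finset (Fin n)
  disj : ∀ i j : Fin r, i ≠ j → Disjoint (layer i) (layer j)
  S : Fin n → Finset F
  Sne : ∀ i : Fin r, ∀ v ∈ layer i, (S v).Nonempty
  Spr : ∀ i : Fin r, ∀ v ∈ layer i, S v ≠ Finset.univ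
  B : Fin r → F
  Blast : B ⟨r - 1, Nat.sub_lt hr Nat.one_pos⟩ ≠ 0
  PC : (Fin n → F) → F
  PCvars : ∀ i : Fin r, ∀ v ∈ layer i, ¬ DependsOnVar n PC v
  PCnc : ¬ ∃ (v : Fin n) (S' : Finset F) (b : F), OneCanalizing n PC v S' b

/-- The product `M_i = ∏_{v ∈ L_i} Q̃_{S_v}(x_v)` over the `i`-th layer. -/
def LayeredForm.M {F : Type*} [Field F] [Fintype F] [DecidableEq F] {n r : ℕ}
    (L : LayeredForm F n r) (i : Fin r) (x : Fin n → F) : F :=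
  ∏ v ∈ L.layer i, Qt (L.S v) (x v)

/-- The function determined by a layered canalizing form:
`f(x) = M₁(M₂(⋯(M_r · P_C + B_r)⋯) + B₂) + B₁`. -/
def LayeredForm.eval {F : Type*} [Field F] [Fintype F] [DecidableEq F] {n r : ℕ}
    (L : LayeredForm F n r) (x : Fin n → F) : F :=
  nestEval (List.ofFn fun i => (L.M i x, L.B i)) (L.PC x)

/-- The number of state-space transitions changed when the input `s` of `f`
is replaced by the constant `a` (edge deletion when `a = 0`). -/
def chCount {F : Type*} [Fintype F] [DecidableEq F] {n : ℕ}
    (f : (Fin n → F) → F) (s : Fin n) (a : F) : ℕ :=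
  (Finset.univ.filter fun x : Fin n → F => f (Function.update x s a) ≠ f x).card

/-!
If deleting `x_a` changes `f` at `x`, then `x_a ≠ 0`, every layer product `M_i(x)` is nonzero
(otherwise the nested form is constant in `P_C`) and `P_C` itself changes. Nonzero `M_i(x)` puts
every layer variable outside its canalizing input set, and a change of `P_C` puts every canalizing
variable `x_{s_j}` of `P_C` outside `S_{s_j}`, since `x_{s_j}` is untouched by the deletion. So the
changed states lie in a box of the claimed size.
-/

open Function

theorem card_filter_forall_apply_mem {ι κ α : Type*} [Fintype ι] [DecidableEq ι] [Fintype κ]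
    [Fintype α] [DecidableEq α] {e : κ → ι} (he : Injective e) (T : κ → Finset α) :
    #{x : ι → α | ∀ k, x (e k) ∈ T k} =
      (∏ k, #(T k)) * Fintype.card α ^ (Fintype.card ι - Fintype.card κ) := by
  set T' : ι → Finset α := extend e T fun _ => univ
  have hT' : ∀ k, T' (e k) = T k := he.extend_apply T _
  have hT'_out : ∀ v, (¬∃ k, e k = v) → T' v = univ := fun v hv => extend_apply' _ _ _ hv
  have hbox : ({x : ι → α | ∀ k, x (e k) ∈ T k} : Finset _) = Fintype.piFinset T' := by
    ext x
    simp only [mem_filter, mem_univ, true_and, Fintype.mem_piFinset]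
    refine ⟨fun hx v => ?_, fun hx k => hT' k ▸ hx (e k)⟩
    by_cases hv : ∃ k, e k = v
    · obtain ⟨k, rfl⟩ := hv
      exact hT' k ▸ hx k
    · exact hT'_out v hv ▸ mem_univ _
  have hout : ∀ v ∈ (univ.image e)ᶜ, #(T' v) = Fintype.card α := fun v hv => by
    rw [hT'_out v (by simpa using hv), card_univ]
  rw [hbox, Fintype.card_piFinset, ← prod_mul_prod_compl (univ.image e), prod_image he.injOn,
    prod_congr rfl hout, prod_const, card_compl, card_image_of_injective _ he]
  simp only [hT', card_univ]

theorem fst_ne_zero_of_nestEval_ne {F : Type*} [MulZeroClass F] [Add F] :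
    ∀ {l : List (F × F)} {P P' : F}, nestEval l P ≠ nestEval l P' → ∀ q ∈ l, q.1 ≠ 0
  | [], _, _, _ => by simp
  | (m, b) :: t, P, P', h => by
    simp only [nestEval] at h
    have hm : m ≠ 0 := by rintro rfl; simp at h
    have ht : nestEval t P ≠ nestEval t P' := fun he => h (by rw [he])
    simpa [hm] using fst_ne_zero_of_nestEval_ne ht

theorem Canalizing.notMem_of_update_ne {F : Type*} [Fintype F] [DecidableEq F] {n : ℕ}
    {g : (Fin n → F) → F} {i : Fin n} {S : Finset F} {b : F} (hg : Canalizing n g i S b)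
    {a : Fin n} (hia : i ≠ a) {x : Fin n → F} {y : F} (h : g (update x a y) ≠ g x) : x i ∉ S :=
  fun hx => h (by rw [hg.2.2 _ (by rwa [update_of_ne hia]), hg.2.2 x hx])

namespace LayeredForm

variable {F : Type*} [Field F] [Fintype F] [DecidableEq F] {n r : ℕ} (L : LayeredForm F n r)

def layerVars : Finset (Fin n) := univ.biUnion L.layer

theorem mem_layerVars {v : Fin n} : v ∈ L.layerVars ↔ ∃ i, v ∈ L.layer i := by
  simp [layerVars]

theorem card_layerVars : #L.layerVars = ∑ i, #(L.layer i) :=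
  card_biUnion fun i _ j _ hij => L.disj i j hij

theorem prod_layerVars {β : Type*} [CommMonoid β] (g : Fin n → β) :
    ∏ v ∈ L.layerVars, g v = ∏ i, ∏ v ∈ L.layer i, g v :=
  prod_biUnion fun i _ j _ hij => L.disj i j hij

theorem M_ne_zero_iff (i : Fin r) (x : Fin n → F) :
    L.M i x ≠ 0 ↔ ∀ v ∈ L.layer i, x v ∉ L.S v := by
  simp [M, prod_ne_zero_iff, Qt]

theorem M_update_of_notMem {i : Fin r} {a : Fin n} (ha : a ∉ L.layer i) (x : Fin n → F) (y : F) :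
    L.M i (update x a y) = L.M i x :=
  prod_congr rfl fun v hv => by rw [update_of_ne (ne_of_mem_of_not_mem hv ha)]

theorem forall_notMem_and_PC_ne_of_eval_update_ne {a : Fin n} (ha : ∀ i, a ∉ L.layer i)
    {x : Fin n → F} {y : F} (h : L.eval (update x a y) ≠ L.eval x) :
    (∀ v ∈ L.layerVars, x v ∉ L.S v) ∧ L.PC (update x a y) ≠ L.PC x := by
  simp only [eval, L.M_update_of_notMem (ha _)] at h
  refine ⟨fun v hv => ?_, mt (congrArg _) h⟩
  obtain ⟨i, hi⟩ := L.mem_layerVars.mp hv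
  exact (L.M_ne_zero_iff i x).mp (fst_ne_zero_of_nestEval_ne h _ (List.mem_ofFn.mpr ⟨i, rfl⟩)) v hi

theorem constraints_of_eval_update_ne {c : ℕ} {sv : Fin c → Fin n} {Ss : Fin c → Finset F}
    (hcan : ∀ j, ∃ b, Canalizing n L.PC (sv j) (Ss j) b) {a : Fin n} (hsv : ∀ j, sv j ≠ a)
    (ha : ∀ i, a ∉ L.layer i) {x : Fin n → F} {y : F} (h : L.eval (update x a y) ≠ L.eval x) :
    (∀ v ∈ L.layerVars, x v ∉ L.S v) ∧ (∀ j, x (sv j) ∉ Ss j) ∧ x a ≠ y := by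
  obtain ⟨hlayer, hPC⟩ := L.forall_notMem_and_PC_ne_of_eval_update_ne ha h
  refine ⟨hlayer, fun j => ?_, fun hxa => hPC (by rw [← hxa, update_eq_self])⟩
  obtain ⟨b, hb⟩ := hcan j
  exact hb.notMem_of_update_ne (hsv j) hPC

end LayeredForm

theorem stmt14_general {F : Type*} [Field F] [Fintype F] [DecidableEq F] {n r c : ℕ}
    (f : (Fin n → F) → F) (L : LayeredForm F n r) (hf : f = L.eval)
    (sv : Fin c → Fin n) (hinj : Function.Injective sv)
    (hrem : ∀ j : Fin c, ∀ i : Fin r, sv j ∉ L.layer i)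
    (Ss : Fin c → Finset F)
    (hcan : ∀ j : Fin c, ∃ b : F, Canalizing n L.PC (sv j) (Ss j) b)
    (a : Fin n) (hadep : DependsOnVar n L.PC a)
    (hanc : ¬ ∃ (S' : Finset F) (b : F), Canalizing n L.PC a S' b) :
    chCount f a 0 ≤
      Fintype.card F ^ (n - (∑ i : Fin r, (L.layer i).card) - c - 1) *
        (∏ i : Fin r, ∏ v ∈ L.layer i, (Fintype.card F - (L.S v).card)) *
        (∏ j : Fin c, (Fintype.card F - (Ss j).card)) * (Fintype.card F - 1) := by
  subst hf
  have ha : ∀ i, a ∉ L.layer i := fun i hi => L.PCvars i a hi hadep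
  have hsv : ∀ j, sv j ≠ a := fun j hj =>
    hanc (let ⟨b, hb⟩ := hcan j; ⟨Ss j, b, hj ▸ hb⟩)
  let e : L.layerVars ⊕ Fin c ⊕ Unit → Fin n := Sum.elim (↑) (Sum.elim sv fun _ => a)
  let T : L.layerVars ⊕ Fin c ⊕ Unit → Finset F :=
    Sum.elim (fun v => (L.S v)ᶜ) (Sum.elim (fun j => (Ss j)ᶜ) fun _ => {0}ᶜ)
  have he : Injective e := by
    refine Subtype.val_injective.sumElim (hinj.sumElim (fun _ _ _ => rfl) fun j _ => hsv j) ?_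
    rintro ⟨v, hv⟩ (j | _) rfl
    · exact (L.mem_layerVars.mp hv).elim fun i => hrem j i
    · exact (L.mem_layerVars.mp hv).elim fun i => ha i
  have hsub : ({x | L.eval (update x a 0) ≠ L.eval x} : Finset (Fin n → F)) ⊆
      ({x | ∀ k, x (e k) ∈ T k} : Finset (Fin n → F)) := by
    intro x hx
    obtain ⟨hlayer, hcanal, hxa⟩ :=
      L.constraints_of_eval_update_ne hcan hsv ha (mem_filter.mp hx).2
    simp only [mem_filter, mem_univ, true_and]
    rintro (⟨v, hv⟩ | j | _) <;> refine mem_compl.mpr ?_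
    exacts [hlayer v hv, hcanal j, notMem_singleton.mpr hxa]
  calc chCount L.eval a 0 ≤ #({x | ∀ k, x (e k) ∈ T k} : Finset (Fin n → F)) :=
        card_le_card hsub
    _ = _ := by
      rw [card_filter_forall_apply_mem he]
      simp only [T, Fintype.prod_sum_type, Sum.elim_inl, Sum.elim_inr, card_compl, card_singleton,
        Fintype.prod_unique, Fintype.card_sum, Fintype.card_coe, L.card_layerVars,
        Fintype.card_fin, Fintype.card_unit, Nat.sub_add_eq]
      rw [prod_coe_sort L.layerVars fun v => Fintype.card F - #(L.S v), L.prod_layerVars]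
      ring

/-- Edge-deletion bound for a non-canalizing variable `a` in the support of
a core function `P_C` having exactly `c ≥ 1` canalizing variables `x_{s₁}, …, x_{s_c}`
with canalizing input sets `S_{s₁}, …, S_{s_c}` (but `P_C` not 1-canalizing). -/
theorem stmt14 {F : Type*} [Field F] [Fintype F] [DecidableEq F] {n r c : ℕ} (hc : 1 ≤ c)
    (f : (Fin n → F) → F) (L : LayeredForm F n r) (hf : f = L.eval)
    (sv : Fin c → Fin n) (hinj : Function.Injective sv)
    (hrem : ∀ j : Fin c, ∀ i : Fin r, sv j ∉ L.layer i)
    (Ss : Fin c → Finset F)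
    (hcan : ∀ j : Fin c, ∃ b : F, Canalizing n L.PC (sv j) (Ss j) b)
    (hexact : ∀ v : Fin n, DependsOnVar n L.PC v →
      (∃ (S' : Finset F) (b : F), Canalizing n L.PC v S' b) → ∃ j : Fin c, sv j = v)
    (a : Fin n) (hadep : DependsOnVar n L.PC a)
    (hanc : ¬ ∃ (S' : Finset F) (b : F), Canalizing n L.PC a S' b) :
    chCount f a 0 ≤
      Fintype.card F ^ (n - (∑ i : Fin r, (L.layer i).card) - c - 1) *
        (∏ i : Fin r, ∏ v ∈ L.layer i, (Fintype.card F - (L.S v).card)) *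
        (∏ j : Fin c, (Fintype.card F - (Ss j).card)) * (Fintype.card F - 1) :=
  stmt14_general f L hf sv hinj hrem Ss hcan a hadep hanc
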